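/- Suppose 1 < q < 2 and b ≥ q−1, or q = 2 and b > 1. Then ψ(k) := 1 + b·k^q − k^{2q−2} − b·k^{q−2} < 0 for all k ∈ (0,1). Consequently, the nonlinearity f(r,z₁,z₂) = −z₁ + z₁^{2q−1} + b·z₁^{q−1}·z₂^q satisfies f(r,z₁,z₂)·z₂ < f(r,z₂,z₁)·z₁ for all z₁ > z₂ > 0 and all r > 0. -/

import Mathlib

/-!
Write `a = q - 1`. Since `k ^ (q - 2) > k ^ q` on `(0, 1)`, `ψ` decreases in `b`, so for `q < 2` it
suffices to take `b = a`. Multiplying by `k ^ (-a)` and putting `k = exp (-s)`, `ψ(k) < 0` becomes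
`sinh (a * s) < a * sinh s`, which is strict convexity of `sinh` on `[0, ∞)` together with
`sinh 0 = 0`. The inequality for `f` follows from the homogeneity identity
`f(z₁, k z₁) (k z₁) - f(k z₁, z₁) z₁ = z₁ ^ (2q) k ψ(k)`.
-/

open Real Set

theorem strictConvexOn_sinh : StrictConvexOn ℝ (Ici 0) sinh := by
  refine StrictMonoOn.strictConvexOn_of_deriv (convex_Ici 0) continuous_sinh.continuousOn ?_
  rw [Real.deriv_sinh, interior_Ici]
  intro x hx y hy hxy
  rwa [cosh_lt_cosh, abs_of_pos hx, abs_of_pos hy]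

theorem sinh_mul_lt_mul_sinh {a s : ℝ} (ha₀ : 0 < a) (ha₁ : a < 1) (hs : 0 < s) :
    sinh (a * s) < a * sinh s := by
  simpa using strictConvexOn_sinh.2 (mem_Ici.2 hs.le) (mem_Ici.2 le_rfl) hs.ne' ha₀
    (sub_pos.2 ha₁) (add_sub_cancel a 1)

theorem rpow_neg_sub_rpow_lt {k a : ℝ} (hk₀ : 0 < k) (hk₁ : k < 1) (ha₀ : 0 < a)
    (ha₁ : a < 1) :
    k ^ (-a) - k ^ a < a * (k⁻¹ - k) := by
  have h := sinh_mul_lt_mul_sinh ha₀ ha₁ (neg_pos.2 (log_neg hk₀ hk₁))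
  rw [sinh_eq, sinh_eq, neg_neg, exp_neg (log k), exp_log hk₀] at h
  rw [rpow_def_of_pos hk₀, rpow_def_of_pos hk₀, show log k * -a = a * -log k by ring,
    show log k * a = -(a * -log k) by ring]
  linarith

noncomputable def psi (q b k : ℝ) : ℝ := 1 + b * k ^ q - k ^ (2 * q - 2) - b * k ^ (q - 2)

theorem psi_neg_of_lt_two {q b k : ℝ} (hq₁ : 1 < q) (hq₂ : q < 2) (hb : q - 1 ≤ b)
    (hk₀ : 0 < k) (hk₁ : k < 1) : psi q b k < 0 := by
  have hsinh := rpow_neg_sub_rpow_lt hk₀ hk₁ (a := q - 1) (by linarith) (by linarith)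
  rw [rpow_neg hk₀.le] at hsinh
  set E := k ^ (q - 1) with hE
  have hE₀ : 0 < E := rpow_pos_of_pos hk₀ _
  have hgap : 0 < k⁻¹ - k := by linarith [(one_lt_inv₀ hk₀).2 hk₁]
  have hpsi : psi q b k = 1 - E * E - b * E * (k⁻¹ - k) := by
    have e₁ : k ^ q = E * k := by rw [hE, ← rpow_add_one hk₀.ne']; ring_nf
    have e₂ : k ^ (q - 2) = E / k := by rw [hE, ← rpow_sub_one hk₀.ne']; ring_nf
    have e₃ : k ^ (2 * q - 2) = E * E := by rw [hE, ← rpow_add hk₀]; ring_nf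
    rw [psi, e₁, e₂, e₃]
    field_simp
    ring
  rw [hpsi, sub_neg]
  calc 1 - E * E = E * (E⁻¹ - E) := by field_simp
    _ < E * ((q - 1) * (k⁻¹ - k)) := mul_lt_mul_of_pos_left hsinh hE₀
    _ ≤ b * E * (k⁻¹ - k) := by
      linarith [mul_le_mul_of_nonneg_right hb (mul_pos hE₀ hgap).le]

theorem psi_two_neg {b k : ℝ} (hb : 1 < b) (hk₀ : 0 < k) (hk₁ : k < 1) : psi 2 b k < 0 := by
  have hpsi : psi 2 b k = (1 - b) * (1 - k ^ 2) := by
    norm_num [psi, rpow_two]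
    ring
  rw [hpsi]
  exact mul_neg_of_neg_of_pos (by linarith) (by nlinarith)

theorem psi_neg {q b k : ℝ} (h : (1 < q ∧ q < 2 ∧ q - 1 ≤ b) ∨ (q = 2 ∧ 1 < b))
    (hk₀ : 0 < k) (hk₁ : k < 1) : psi q b k < 0 := by
  rcases h with ⟨hq₁, hq₂, hb⟩ | ⟨rfl, hb⟩
  · exact psi_neg_of_lt_two hq₁ hq₂ hb hk₀ hk₁
  · exact psi_two_neg hb hk₀ hk₁

noncomputable def nonlinearity (q b z₁ z₂ : ℝ) : ℝ :=
  -z₁ + z₁ ^ (2 * q - 1) + b * z₁ ^ (q - 1) * z₂ ^ q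

theorem nonlinearity_mul_sub_nonlinearity_mul {q b k z : ℝ} (hk : 0 < k) (hz : 0 < z) :
    nonlinearity q b z (k * z) * (k * z) - nonlinearity q b (k * z) z * z =
      z ^ (2 * q) * k * psi q b k := by
  have hz₁ : z ^ (2 * q - 1) * z = z ^ (2 * q) := by rw [← rpow_add_one hz.ne']; ring_nf
  have hz₂ : z ^ (q - 1) * z ^ q * z = z ^ (2 * q) := by
    rw [← rpow_add hz, ← rpow_add_one hz.ne']; ring_nf
  have hk₁ : k ^ (2 * q - 1) = k ^ (2 * q - 2) * k := by rw [← rpow_add_one hk.ne']; ring_nf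
  have hk₂ : k ^ (q - 1) = k ^ (q - 2) * k := by rw [← rpow_add_one hk.ne']; ring_nf
  simp only [nonlinearity, psi, mul_rpow hk.le hz.le, hk₁, hk₂]
  linear_combination k * (1 - k ^ (2 * q - 2)) * hz₁ + b * k * (k ^ q - k ^ (q - 2)) * hz₂

/-- If `1 < q < 2, b ≥ q-1` or `q = 2, b > 1` then
`ψ(k) = 1 + b k^q − k^{2q−2} − b k^{q−2} < 0` on `(0,1)`; consequently the
nonlinearity `f(r,z₁,z₂) = -z₁ + z₁^{2q-1} + b z₁^{q-1} z₂^q` satisfies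
`f(r,z₁,z₂) z₂ < f(r,z₂,z₁) z₁` for all `z₁ > z₂ > 0` and `r > 0`. -/
theorem psi_negative (q b : ℝ)
    (h : (1 < q ∧ q < 2 ∧ q - 1 ≤ b) ∨ (q = 2 ∧ 1 < b)) :
    (∀ k ∈ Set.Ioo (0:ℝ) 1,
      1 + b * k ^ q - k ^ (2 * q - 2) - b * k ^ (q - 2) < 0) ∧
    (∀ r > (0:ℝ), ∀ z₁ z₂ : ℝ, 0 < z₂ → z₂ < z₁ →
      (-z₁ + z₁ ^ (2 * q - 1) + b * z₁ ^ (q - 1) * z₂ ^ q) * z₂ <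
      (-z₂ + z₂ ^ (2 * q - 1) + b * z₂ ^ (q - 1) * z₁ ^ q) * z₁) := by
  refine ⟨fun k hk ↦ psi_neg h hk.1 hk.2, fun _ _ z₁ z₂ hz₂ hz₂₁ ↦ ?_⟩
  have hz₁ : 0 < z₁ := hz₂.trans hz₂₁
  obtain ⟨k, hk₀, hk₁, rfl⟩ : ∃ k, 0 < k ∧ k < 1 ∧ z₂ = k * z₁ :=
    ⟨z₂ / z₁, div_pos hz₂ hz₁, (div_lt_one hz₁).2 hz₂₁,
      (div_mul_cancel₀ z₂ hz₁.ne').symm⟩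
  have hdiff : nonlinearity q b z₁ (k * z₁) * (k * z₁)
      - nonlinearity q b (k * z₁) z₁ * z₁ < 0 := by
    rw [nonlinearity_mul_sub_nonlinearity_mul hk₀ hz₁]
    exact mul_neg_of_pos_of_neg (mul_pos (rpow_pos_of_pos hz₁ _) hk₀) (psi_neg h hk₀ hk₁)
  exact sub_neg.1 hdiff
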